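/- Let r > 1, N ≥ 2, and 1/2 < d ≤ 1. Define γ(d) = (r(1-d)+d)/((1-d)+rd) and ρ(r) = (1 - γ)/(1 - γ^N). Then γ(d) < 1 and ρ is strictly increasing as a function of r on (1,∞). -/

import Mathlib

open Finset

/-!
For `r > 1` the backward/forward ratio `γ` lies in `(0, 1)` and is strictly decreasing in `r`,
since `γ' = (1 - 2d) / ((1 - d) + r d)²`. Away from `γ = 1` the fixation probability is
`ρ = (1 + γ + ⋯ + γ^(N-1))⁻¹`, and for `N ≥ 2` the geometric sum is strictly increasing on
`[0, ∞)`; composing the two decreasing maps makes `ρ` strictly increasing.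
-/

section GeomSum

variable {R : Type*} [Semiring R] [LinearOrder R] [IsStrictOrderedRing R]

theorem strictMonoOn_geom_sum {N : ℕ} (hN : 2 ≤ N) :
    StrictMonoOn (fun x : R => ∑ i ∈ range N, x ^ i) (Set.Ici 0) := by
  intro x hx y hy hxy
  refine sum_lt_sum (fun i _ => pow_le_pow_left₀ hx hxy.le i) ⟨1, mem_range.2 hN, ?_⟩
  simpa using hxy

end GeomSum

theorem one_sub_div_one_sub_pow_eq_inv_geom_sum {K : Type*} [Field K] {x : K} (hx : x ≠ 1)
    (N : ℕ) : (1 - x) / (1 - x ^ N) = (∑ i ∈ range N, x ^ i)⁻¹ := by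
  rw [geom_sum_eq hx, inv_div, ← neg_sub, ← neg_sub (x ^ N), neg_div_neg_eq]

theorem strictAntiOn_one_sub_div_one_sub_pow {N : ℕ} (hN : 2 ≤ N) :
    StrictAntiOn (fun x : ℝ => (1 - x) / (1 - x ^ N)) (Set.Ico 0 1) := by
  intro x hx y hy hxy
  simp only [one_sub_div_one_sub_pow_eq_inv_geom_sum hx.2.ne,
    one_sub_div_one_sub_pow_eq_inv_geom_sum hy.2.ne]
  exact inv_strictAnti₀ (geom_sum_pos hx.1 (by omega))
    (strictMonoOn_geom_sum hN hx.1 (Set.mem_Ici.2 hy.1) hxy)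

/-- The ratio `γ` of the probabilities that the number of red individuals moves down rather than
up, for fecundity advantage `r` and density `d` of red sites. -/
noncomputable def transitionRatio (d r : ℝ) : ℝ :=
  (r * (1 - d) + d) / ((1 - d) + r * d)

section TransitionRatio

variable {d r : ℝ}

theorem transitionRatio_denom_pos (hd : 0 < d) (hr : 1 < r) : 0 < (1 - d) + r * d := by
  nlinarith

theorem transitionRatio_lt_one (hd : 1 / 2 < d) (hr : 1 < r) : transitionRatio d r < 1 := by
  rw [transitionRatio, div_lt_one (transitionRatio_denom_pos (by linarith) hr)]
  nlinarith

theorem transitionRatio_pos (hd : 0 < d) (hd1 : d ≤ 1) (hr : 1 < r) : 0 < transitionRatio d r :=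
  div_pos (by nlinarith) (transitionRatio_denom_pos hd hr)

theorem strictAntiOn_transitionRatio (hd : 1 / 2 < d) :
    StrictAntiOn (transitionRatio d) (Set.Ioi 1) := by
  intro a ha b hb hab
  rw [transitionRatio, transitionRatio,
    div_lt_div_iff₀ (transitionRatio_denom_pos (by linarith) hb)
      (transitionRatio_denom_pos (by linarith) ha)]
  nlinarith

theorem mapsTo_transitionRatio (hd : 1 / 2 < d) (hd1 : d ≤ 1) :
    Set.MapsTo (transitionRatio d) (Set.Ioi 1) (Set.Ico 0 1) := fun _ hr =>
  ⟨(transitionRatio_pos (by linarith) hd1 hr).le, transitionRatio_lt_one hd hr⟩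

end TransitionRatio

/-- For `N ≥ 2` and `1/2 < d ≤ 1`, with
`γ(r) = (r(1-d)+d)/((1-d)+rd)` and `ρ(r) = (1-γ)/(1-γ^N)`, we have `γ(r) < 1`
for all `r > 1`, and `ρ` is strictly increasing in `r` on `(1,∞)`. -/
theorem stmt_4 (N : ℕ) (hN : 2 ≤ N) (d : ℝ) (hd : 1 / 2 < d) (hd1 : d ≤ 1)
    (γ : ℝ → ℝ) (hγ : ∀ r, γ r = (r * (1 - d) + d) / ((1 - d) + r * d))
    (ρ : ℝ → ℝ) (hρ : ∀ r, ρ r = (1 - γ r) / (1 - γ r ^ N)) :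
    (∀ r : ℝ, 1 < r → γ r < 1) ∧ StrictMonoOn ρ (Set.Ioi (1 : ℝ)) := by
  obtain rfl : γ = transitionRatio d := funext hγ
  obtain rfl : ρ = (fun x => (1 - x) / (1 - x ^ N)) ∘ transitionRatio d := funext hρ
  exact ⟨fun _ => transitionRatio_lt_one hd,
    (strictAntiOn_one_sub_div_one_sub_pow hN).comp (strictAntiOn_transitionRatio hd)
      (mapsTo_transitionRatio hd hd1)⟩
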